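/- Let a finite DTMDP with uniformisation rate q > 0, time bound t ≥ 0, reward structure (c, f) and precision ε > 0 be given, and let k ∈ ℕ be ε-sufficient. Then the maximising value-iteration vector q'_0 satisfies, for every state s0, |q'_0(s0) − sup_{σ ∈ CR} V(σ, s0)| < ε, the supremum being over all counting randomised (CR) schedulers. -/

import Mathlib

/-!
For a fixed counting scheduler, backward induction shows that its value-iteration vector at
`s0` is the sum of the first `k + 1` terms of the series defining its value, and the maximising
iteration dominates it, with equality for the deterministic scheduler that always picks a
maximising action. Since the distributions are stochastic, the tail of the series is at most
`ψ(k) · max f + Σ_{i > k} ψ(i) · max c / q`, and `Σ_i ψ(i) ≤ qt` (it is the mean of a Poisson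
variable); ε-sufficiency makes this tail smaller than `ε`. So the supremum over CR schedulers
lies in `[q'_0, q'_0 + ε)`.
-/

open scoped BigOperators

namespace TR

variable {S A : Type} [Fintype S] [Fintype A] [DecidableEq S] [DecidableEq A]

/-- Poisson probabilities `φ_λ(i) = λ^i/i! · e^{−λ}`. -/
noncomputable def phi (lam : ℝ) (i : ℕ) : ℝ :=
  lam ^ i / (Nat.factorial i : ℝ) * Real.exp (-lam)

/-- `ψ_λ(i) = 1 − Σ_{j=0}^{i} φ_λ(j)`. -/
noncomputable def psi (lam : ℝ) (i : ℕ) : ℝ :=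
  1 - ∑ j ∈ Finset.range (i + 1), phi lam j

/-- Action `a` is enabled in state `s`. -/
def Enabled (P : S → A → S → ℝ) (s : S) (a : A) : Prop :=
  ∑ s', P s a s' = 1

/-- `P` is the transition function of a finite DTMDP. -/
def IsDTMDP (P : S → A → S → ℝ) : Prop :=
  (∀ s a s', 0 ≤ P s a s') ∧
  (∀ s a, (∑ s', P s a s') = 0 ∨ (∑ s', P s a s') = 1) ∧
  (∀ s, ∃ a, Enabled P s a)

/-- History-dependent randomised scheduler.  A history is encoded as a pair of
a list of (state, action) pairs (most recent first) and the current state. -/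
def IsHR (P : S → A → S → ℝ) (sch : List (S × A) × S → A → ℝ) : Prop :=
  (∀ h a, 0 ≤ sch h a) ∧ (∀ h, ∑ a, sch h a = 1) ∧
  (∀ h a, 0 < sch h a → Enabled P h.2 a)

/-- Probability of the path recorded in the given history (of length `n`,
starting at `s0`) under the HR scheduler `sch`. -/
noncomputable def hrHistProb (P : S → A → S → ℝ) (sch : List (S × A) × S → A → ℝ)
    (s0 : S) : ℕ → List (S × A) × S → ℝ
  | 0, h => if h.1 = [] ∧ h.2 = s0 then 1 else 0
  | _ + 1, ([], _) => 0
  | n + 1, ((s, a) :: rest, s') =>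
      hrHistProb P sch s0 n (rest, s) * sch (rest, s) a * P s a s'

/-- Transient probability `tprob^σ(s0, n, s)`: total probability of all paths of
length `n` from `s0` ending in `s`. -/
noncomputable def hrProb (P : S → A → S → ℝ) (sch : List (S × A) × S → A → ℝ)
    (s0 : S) (n : ℕ) (s : S) : ℝ :=
  ∑' l : List (S × A), hrHistProb P sch s0 n (l, s)

/-- Counting randomised scheduler. -/
def IsCR (P : S → A → S → ℝ) (sch : S → ℕ → A → ℝ) : Prop :=
  (∀ s n a, 0 ≤ sch s n a) ∧ (∀ s n, ∑ a, sch s n a = 1) ∧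
  (∀ s n a, 0 < sch s n a → Enabled P s a)

/-- Transient distribution of a CR scheduler. -/
noncomputable def crProb (P : S → A → S → ℝ) (sch : S → ℕ → A → ℝ) (s0 : S) :
    ℕ → S → ℝ
  | 0 => fun s => if s = s0 then 1 else 0
  | n + 1 => fun s' => ∑ s, crProb P sch s0 n s * ∑ a, sch s n a * P s a s'

/-- Counting deterministic scheduler. -/
def IsCD (P : S → A → S → ℝ) (d : S → ℕ → A) : Prop :=
  ∀ s n, Enabled P s (d s n)

/-- Transient distribution of a CD scheduler. -/
noncomputable def cdProb (P : S → A → S → ℝ) (d : S → ℕ → A) (s0 : S) :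
    ℕ → S → ℝ
  | 0 => fun s => if s = s0 then 1 else 0
  | n + 1 => fun s' => ∑ s, cdProb P d s0 n s * P s (d s n) s'

/-- The value `V = Σ_i [ φ_{qt}(i)·Σ_s p_i(s)·f(s) + ψ_{qt}(i)·Σ_s p_i(s)·c(s)/q ]`
of transient distributions `p` w.r.t. uniformisation rate `q`, time bound `t`
and rewards `(c, f)`. -/
noncomputable def value (q t : ℝ) (c f : S → ℝ) (p : ℕ → S → ℝ) : ℝ :=
  ∑' i : ℕ, (phi (q * t) i * ∑ s, p i s * f s
    + psi (q * t) i * ∑ s, p i s * (c s / q))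

/-- Value-iteration vectors of a CR scheduler: `crVI … k j` is `q_{k+1-j}`,
i.e. `crVI … k 0 = q_{k+1} ≡ 0` and `crVI … k (k+1) = q_0`. -/
noncomputable def crVI (P : S → A → S → ℝ) (sch : S → ℕ → A → ℝ)
    (q t : ℝ) (c f : S → ℝ) (k : ℕ) : ℕ → S → ℝ
  | 0 => fun _ => 0
  | j + 1 => fun s =>
      (∑ a, sch s (k - j) a * ∑ s', P s a s' * crVI P sch q t c f k j s')
      + phi (q * t) (k - j) * f s + psi (q * t) (k - j) * (c s / q)

/-- Maximising value-iteration vectors: `maxVI … k j` is `q'_{k+1-j}`,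
i.e. `maxVI … k 0 = q'_{k+1} ≡ 0` and `maxVI … k (k+1) = q'_0`. -/
noncomputable def maxVI (P : S → A → S → ℝ)
    (q t : ℝ) (c f : S → ℝ) (k : ℕ) : ℕ → S → ℝ
  | 0 => fun _ => 0
  | j + 1 => fun s =>
      sSup {x : ℝ | ∃ a, Enabled P s a ∧
        x = ∑ s', P s a s' * maxVI P q t c f k j s'}
      + phi (q * t) (k - j) * f s + psi (q * t) (k - j) * (c s / q)

/-- Maximum of a real-valued function on a finite nonempty type. -/
noncomputable def maxOf [Nonempty S] (g : S → ℝ) : ℝ :=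
  Finset.univ.sup' Finset.univ_nonempty g

/-- `k` is `ε`-sufficient: `Σ_{n=0}^{k} ψ_{qt}(n) > qt − ε·q/(2·max_s c(s))`
(dropped if `max_s c(s) = 0`) and `ψ_{qt}(k)·max_s f(s) < ε/2`. -/
def EpsSufficient [Nonempty S] (q t : ℝ) (c f : S → ℝ) (ε : ℝ) (k : ℕ) : Prop :=
  (maxOf c = 0 ∨
    (∑ n ∈ Finset.range (k + 1), psi (q * t) n) > q * t - ε * q / (2 * maxOf c)) ∧
  psi (q * t) k * maxOf f < ε / 2

/-- `n`-step transition probabilities (matrix powers) of a stochastic matrix. -/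
noncomputable def matPow (P : S → S → ℝ) : ℕ → S → S → ℝ
  | 0 => fun s s' => if s = s' then 1 else 0
  | n + 1 => fun s s' => ∑ s'', matPow P n s s'' * P s'' s'

/-- `part` is a partition of the finite state set `S`. -/
def IsPartition (part : Finset (Finset S)) : Prop :=
  (∀ z ∈ part, z.Nonempty) ∧ (∀ s : S, ∃ z ∈ part, s ∈ z) ∧
  (∀ z ∈ part, ∀ z' ∈ part, z ≠ z' → Disjoint z z')

/-- Abstraction DTMDP of a stochastic matrix w.r.t. a partition: states are
blocks, actions are concrete states, `P̄(z, s, z') = Σ_{s' ∈ z'} P(s,s')` if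
`s ∈ z` and `0` otherwise. -/
noncomputable def abst (P : S → S → ℝ) (part : Finset (Finset S)) :
    {z // z ∈ part} → S → {z // z ∈ part} → ℝ :=
  fun z s z' => if s ∈ z.1 then ∑ s' ∈ z'.1, P s s' else 0

section Poisson

variable {lam : ℝ}

lemma phi_nonneg (hl : 0 ≤ lam) (i : ℕ) : 0 ≤ phi lam i := by
  unfold phi; positivity

lemma hasSum_phi (lam : ℝ) : HasSum (phi lam) 1 := by
  have h := (NormedSpace.expSeries_div_hasSum_exp lam).mul_right (Real.exp (-lam))
  rwa [← Real.exp_eq_exp_ℝ, ← Real.exp_add, add_neg_cancel, Real.exp_zero] at h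

lemma one_sub_sum_range_phi (lam : ℝ) (N : ℕ) :
    1 - ∑ j ∈ Finset.range N, phi lam j = ∑' j, phi lam (j + N) := by
  rw [← (hasSum_phi lam).tsum_eq, ← (hasSum_phi lam).summable.sum_add_tsum_nat_add N]
  ring

lemma psi_eq_tsum (lam : ℝ) (i : ℕ) : psi lam i = ∑' j, phi lam (j + (i + 1)) :=
  one_sub_sum_range_phi lam (i + 1)

lemma psi_nonneg (hl : 0 ≤ lam) (i : ℕ) : 0 ≤ psi lam i := by
  rw [psi_eq_tsum]
  exact tsum_nonneg fun j => phi_nonneg hl _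

lemma psi_succ (lam : ℝ) (i : ℕ) : psi lam (i + 1) = psi lam i - phi lam (i + 1) := by
  rw [psi, psi, Finset.sum_range_succ]
  ring

lemma succ_mul_phi_succ (lam : ℝ) (i : ℕ) :
    ((i : ℝ) + 1) * phi lam (i + 1) = lam * phi lam i := by
  rw [phi, phi, Nat.factorial_succ, pow_succ]
  push_cast
  field_simp

/-- Exchanging the order of summation, `Σ_{i<N} ψ(i) = Σ_{1≤j≤N} j φ(j) + N ψ(N)`, and
`j φ(j) = λ φ(j-1)`. -/
lemma sum_range_psi (lam : ℝ) (N : ℕ) :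
    ∑ i ∈ Finset.range N, psi lam i
      = lam * ∑ j ∈ Finset.range N, phi lam j + N * psi lam N := by
  induction N with
  | zero => simp
  | succ N ih =>
    rw [Finset.sum_range_succ, Finset.sum_range_succ, ih, psi_succ]
    push_cast
    linear_combination succ_mul_phi_succ lam N

lemma natCast_mul_psi_le (hl : 0 ≤ lam) (N : ℕ) :
    N * psi lam N ≤ lam * (1 - ∑ j ∈ Finset.range N, phi lam j) := by
  have hs : ∀ k, Summable fun j => phi lam (j + k) := fun k =>
    (summable_nat_add_iff k).2 (hasSum_phi lam).summable
  rw [psi_eq_tsum, one_sub_sum_range_phi, ← tsum_mul_left, ← tsum_mul_left]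
  refine (hs _).mul_left _ |>.tsum_le_tsum (fun j => ?_) ((hs _).mul_left _)
  calc (N : ℝ) * phi lam (j + N + 1)
      ≤ ((j + N : ℕ) + 1) * phi lam (j + N + 1) := by
        gcongr
        · exact phi_nonneg hl _
        · push_cast; linarith [j.cast_nonneg (α := ℝ)]
    _ = lam * phi lam (j + N) := succ_mul_phi_succ lam (j + N)

lemma sum_range_psi_le (hl : 0 ≤ lam) (N : ℕ) : ∑ i ∈ Finset.range N, psi lam i ≤ lam := by
  rw [sum_range_psi]
  linarith [natCast_mul_psi_le hl N]

lemma summable_psi (hl : 0 ≤ lam) : Summable (psi lam) :=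
  summable_of_sum_range_le (psi_nonneg hl) (sum_range_psi_le hl)

lemma tsum_psi_nat_add_le (hl : 0 ≤ lam) (N : ℕ) :
    ∑' j, psi lam (j + N) ≤ lam - ∑ i ∈ Finset.range N, psi lam i := by
  have h := (summable_psi hl).sum_add_tsum_nat_add N
  linarith [Real.tsum_le_of_sum_range_le (psi_nonneg hl) (sum_range_psi_le hl)]

end Poisson

end TR

namespace TR

section Value

variable {S : Type} [Fintype S]

/-- `value q t c f p = ∑' i, valueTerm q t c f p i` holds definitionally. -/
noncomputable def valueTerm (q t : ℝ) (c f : S → ℝ) (p : ℕ → S → ℝ) (i : ℕ) : ℝ :=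
  phi (q * t) i * ∑ s, p i s * f s + psi (q * t) i * ∑ s, p i s * (c s / q)

lemma valueTerm_nonneg {q t : ℝ} {c f : S → ℝ} {p : ℕ → S → ℝ} (hq : 0 ≤ q) (ht : 0 ≤ t)
    (hc : ∀ s, 0 ≤ c s) (hf : ∀ s, 0 ≤ f s) (hp0 : ∀ i s, 0 ≤ p i s) (i : ℕ) :
    0 ≤ valueTerm q t c f p i := by
  have hl := mul_nonneg hq ht
  unfold valueTerm
  exact add_nonneg
    (mul_nonneg (phi_nonneg hl i) (Finset.sum_nonneg fun s _ => mul_nonneg (hp0 i s) (hf s)))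
    (mul_nonneg (psi_nonneg hl i)
      (Finset.sum_nonneg fun s _ => mul_nonneg (hp0 i s) (div_nonneg (hc s) hq)))

variable [Nonempty S]

lemma sum_mul_le_maxOf {w : S → ℝ} (g : S → ℝ) (hw0 : ∀ s, 0 ≤ w s) (hw1 : ∑ s, w s = 1) :
    ∑ s, w s * g s ≤ maxOf g :=
  calc ∑ s, w s * g s ≤ ∑ s, w s * maxOf g := Finset.sum_le_sum fun s _ =>
        mul_le_mul_of_nonneg_left (Finset.le_sup' g (Finset.mem_univ s)) (hw0 s)
    _ = maxOf g := by rw [← Finset.sum_mul, hw1, one_mul]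

lemma maxOf_nonneg {g : S → ℝ} (hg : ∀ s, 0 ≤ g s) : 0 ≤ maxOf g :=
  (hg (Classical.arbitrary S)).trans (Finset.le_sup' g (Finset.mem_univ _))

/-- Upper bound on the part of the value accrued after step `k`. -/
noncomputable def truncErr (q t : ℝ) (c f : S → ℝ) (k : ℕ) : ℝ :=
  psi (q * t) k * maxOf f
    + (q * t - ∑ n ∈ Finset.range (k + 1), psi (q * t) n) * (maxOf c / q)

variable {q t : ℝ} {c f : S → ℝ} {p : ℕ → S → ℝ}

lemma EpsSufficient.truncErr_lt {ε : ℝ} {k : ℕ} (hq : 0 < q)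
    (hc : 0 ≤ maxOf c) (hε : 0 < ε) (hk : EpsSufficient q t c f ε k) :
    truncErr q t c f k < ε := by
  suffices (q * t - ∑ n ∈ Finset.range (k + 1), psi (q * t) n) * (maxOf c / q) < ε / 2 by
    unfold truncErr; linarith [hk.2]
  rcases hc.eq_or_lt with hc0 | hc0
  · rw [← hc0, zero_div, mul_zero]
    positivity
  · have hlt := hk.1.resolve_left hc0.ne'
    calc _ < ε * q / (2 * maxOf c) * (maxOf c / q) := by gcongr; linarith
      _ = ε / 2 := by field_simp

lemma valueTerm_le (hq : 0 ≤ q) (ht : 0 ≤ t) (hp0 : ∀ i s, 0 ≤ p i s)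
    (hp1 : ∀ i, ∑ s, p i s = 1) (i : ℕ) :
    valueTerm q t c f p i ≤ phi (q * t) i * maxOf f + psi (q * t) i * (maxOf c / q) := by
  have hl := mul_nonneg hq ht
  have hcq : ∑ s, p i s * (c s / q) ≤ maxOf c / q := by
    simp_rw [mul_div_assoc', ← Finset.sum_div]
    exact div_le_div_of_nonneg_right (sum_mul_le_maxOf c (hp0 i) (hp1 i)) hq
  unfold valueTerm
  gcongr
  · exact phi_nonneg hl i
  · exact sum_mul_le_maxOf f (hp0 i) (hp1 i)
  · exact psi_nonneg hl i

lemma summable_valueTerm (hq : 0 ≤ q) (ht : 0 ≤ t) (hc : ∀ s, 0 ≤ c s) (hf : ∀ s, 0 ≤ f s)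
    (hp0 : ∀ i s, 0 ≤ p i s) (hp1 : ∀ i, ∑ s, p i s = 1) :
    Summable (valueTerm q t c f p) :=
  .of_nonneg_of_le (valueTerm_nonneg hq ht hc hf hp0) (valueTerm_le hq ht hp0 hp1)
    (((hasSum_phi _).summable.mul_right _).add ((summable_psi (mul_nonneg hq ht)).mul_right _))

lemma sum_range_valueTerm_le_value (hq : 0 ≤ q) (ht : 0 ≤ t) (hc : ∀ s, 0 ≤ c s)
    (hf : ∀ s, 0 ≤ f s) (hp0 : ∀ i s, 0 ≤ p i s) (hp1 : ∀ i, ∑ s, p i s = 1) (N : ℕ) :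
    ∑ i ∈ Finset.range N, valueTerm q t c f p i ≤ value q t c f p :=
  (summable_valueTerm hq ht hc hf hp0 hp1).sum_le_tsum _
    fun i _ => valueTerm_nonneg hq ht hc hf hp0 i

lemma value_le_sum_range_valueTerm_add_truncErr (hq : 0 ≤ q) (ht : 0 ≤ t)
    (hc : ∀ s, 0 ≤ c s) (hf : ∀ s, 0 ≤ f s) (hp0 : ∀ i s, 0 ≤ p i s)
    (hp1 : ∀ i, ∑ s, p i s = 1) (k : ℕ) :
    value q t c f p ≤ ∑ i ∈ Finset.range (k + 1), valueTerm q t c f p i + truncErr q t c f k := by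
  have hl := mul_nonneg hq ht
  have hv := summable_valueTerm hq ht hc hf hp0 hp1
  have hφ := (summable_nat_add_iff (k + 1)).2 ((hasSum_phi (q * t)).summable.mul_right (maxOf f))
  have hψ := (summable_nat_add_iff (k + 1)).2 ((summable_psi hl).mul_right (maxOf c / q))
  have htail : ∑' i, valueTerm q t c f p (i + (k + 1)) ≤ truncErr q t c f k :=
    calc ∑' i, valueTerm q t c f p (i + (k + 1))
        ≤ ∑' i, (phi (q * t) (i + (k + 1)) * maxOf f
            + psi (q * t) (i + (k + 1)) * (maxOf c / q)) :=
          ((summable_nat_add_iff (k + 1)).2 hv).tsum_le_tsum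
            (fun i => valueTerm_le hq ht hp0 hp1 _) (hφ.add hψ)
      _ = psi (q * t) k * maxOf f + (∑' i, psi (q * t) (i + (k + 1))) * (maxOf c / q) := by
          rw [hφ.tsum_add hψ, tsum_mul_right, tsum_mul_right, psi_eq_tsum]
      _ ≤ truncErr q t c f k := by
          unfold truncErr
          gcongr
          · exact div_nonneg (maxOf_nonneg hc) hq
          · exact tsum_psi_nat_add_le hl (k + 1)
  change ∑' i, valueTerm q t c f p i ≤ _
  rw [← hv.sum_add_tsum_nat_add (k + 1)]
  exact add_le_add_right htail _

end Value

section Schedulers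

variable {S A : Type} [Fintype S] [Fintype A] {P : S → A → S → ℝ} {sch : S → ℕ → A → ℝ}

lemma IsCR.sum_mul_sum_eq_one (hs : IsCR P sch) (s : S) (n : ℕ) :
    ∑ a, sch s n a * ∑ s', P s a s' = 1 := by
  rw [← hs.2.1 s n]
  refine Finset.sum_congr rfl fun a _ => ?_
  rcases (hs.1 s n a).eq_or_lt with h | h
  · rw [← h, zero_mul]
  · rw [hs.2.2 s n a h, mul_one]

variable [DecidableEq S]

lemma crProb_nonneg (hP : ∀ s a s', 0 ≤ P s a s') (hs : IsCR P sch) (s0 : S) (n : ℕ) (s : S) :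
    0 ≤ crProb P sch s0 n s := by
  induction n generalizing s with
  | zero => unfold crProb; positivity
  | succ n ih =>
    exact Finset.sum_nonneg fun s _ => mul_nonneg (ih s)
      (Finset.sum_nonneg fun a _ => mul_nonneg (hs.1 s n a) (hP s a _))

lemma sum_crProb_succ_mul (s0 : S) (n : ℕ) (v : S → ℝ) :
    ∑ s', crProb P sch s0 (n + 1) s' * v s'
      = ∑ s, crProb P sch s0 n s * ∑ a, sch s n a * ∑ s', P s a s' * v s' := by
  simp only [crProb, Finset.sum_mul, Finset.mul_sum]
  rw [Finset.sum_comm]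
  refine Finset.sum_congr rfl fun s _ => ?_
  rw [Finset.sum_comm]
  exact Finset.sum_congr rfl fun a _ => Finset.sum_congr rfl fun s' _ => by ring

lemma sum_crProb (hs : IsCR P sch) (s0 : S) (n : ℕ) : ∑ s, crProb P sch s0 n s = 1 := by
  induction n with
  | zero => simp [crProb]
  | succ n ih =>
    simpa [hs.sum_mul_sum_eq_one, ih] using
      sum_crProb_succ_mul (P := P) (sch := sch) s0 n (fun _ => 1)

/-- Backward induction: `crVI … k j` is the expected reward of steps `n, …, k` seen from
step `n = k + 1 - j`. -/
lemma sum_crProb_mul_crVI (q t : ℝ) (c f : S → ℝ) (s0 : S) (k : ℕ) :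
    ∀ j n, n + j = k + 1 →
      ∑ s, crProb P sch s0 n s * crVI P sch q t c f k j s
        = ∑ i ∈ Finset.Ico n (k + 1), valueTerm q t c f (crProb P sch s0) i := by
  intro j
  induction j with
  | zero => intro n hn; simp [crVI, show n = k + 1 by omega]
  | succ j ih =>
    intro n hn
    obtain rfl : k - j = n := by omega
    rw [Finset.sum_eq_sum_Ico_succ_bot (by omega), ← ih (k - j + 1) (by omega),
      sum_crProb_succ_mul, valueTerm, Finset.mul_sum, Finset.mul_sum, ← Finset.sum_add_distrib,
      ← Finset.sum_add_distrib]
    refine Finset.sum_congr rfl fun s _ => ?_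
    simp only [crVI]
    ring

lemma crVI_eq_sum_range_valueTerm (q t : ℝ) (c f : S → ℝ) (s0 : S) (k : ℕ) :
    crVI P sch q t c f k (k + 1) s0
      = ∑ i ∈ Finset.range (k + 1), valueTerm q t c f (crProb P sch s0) i := by
  rw [Finset.range_eq_Ico, ← sum_crProb_mul_crVI q t c f s0 k (k + 1) 0 (zero_add _)]
  simp [crProb]

end Schedulers

section Optimality

variable {S A : Type} [Fintype S] [Fintype A] {P : S → A → S → ℝ}

lemma finite_setOf_enabled (v : S → ℝ) (s : S) :
    {x | ∃ a, Enabled P s a ∧ x = ∑ s', P s a s' * v s'}.Finite :=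
  (Set.finite_range fun a => ∑ s', P s a s' * v s').subset fun _ ⟨a, _, hx⟩ => ⟨a, hx.symm⟩

lemma le_sSup_enabled (v : S → ℝ) {s : S} {a : A} (ha : Enabled P s a) :
    ∑ s', P s a s' * v s' ≤ sSup {x | ∃ a, Enabled P s a ∧ x = ∑ s', P s a s' * v s'} :=
  le_csSup (finite_setOf_enabled v s).bddAbove ⟨a, ha, rfl⟩

lemma exists_enabled_eq_sSup {s : S} (hs : ∃ a, Enabled P s a) (v : S → ℝ) :
    ∃ a, Enabled P s a ∧
      sSup {x | ∃ a, Enabled P s a ∧ x = ∑ s', P s a s' * v s'} = ∑ s', P s a s' * v s' := by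
  obtain ⟨a₀, ha₀⟩ := hs
  refine Set.Nonempty.csSup_mem ?_ (finite_setOf_enabled v s)
  exact ⟨_, a₀, ha₀, rfl⟩

lemma crVI_le_maxVI (hP : ∀ s a s', 0 ≤ P s a s') {sch : S → ℕ → A → ℝ} (hs : IsCR P sch)
    (q t : ℝ) (c f : S → ℝ) (k j : ℕ) (s : S) :
    crVI P sch q t c f k j s ≤ maxVI P q t c f k j s := by
  induction j generalizing s with
  | zero => exact le_rfl
  | succ j ih =>
    have hstep : ∑ a, sch s (k - j) a * ∑ s', P s a s' * crVI P sch q t c f k j s'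
        ≤ sSup {x | ∃ a, Enabled P s a ∧ x = ∑ s', P s a s' * maxVI P q t c f k j s'} :=
      calc _ ≤ ∑ a, sch s (k - j) a *
            sSup {x | ∃ a, Enabled P s a ∧ x = ∑ s', P s a s' * maxVI P q t c f k j s'} := by
            refine Finset.sum_le_sum fun a _ => ?_
            rcases (hs.1 s (k - j) a).eq_or_lt with h | h
            · rw [← h, zero_mul, zero_mul]
            · gcongr
              calc _ ≤ ∑ s', P s a s' * maxVI P q t c f k j s' := by
                    gcongr with s'; exacts [hP s a s', ih s']
                _ ≤ _ := le_sSup_enabled _ (hs.2.2 s (k - j) a h)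
        _ = _ := by rw [← Finset.sum_mul, hs.2.1, one_mul]
    simp only [crVI, maxVI]
    linarith

variable [DecidableEq A]

def cdToCR (d : S → ℕ → A) : S → ℕ → A → ℝ :=
  fun s n a => if a = d s n then 1 else 0

lemma IsCD.isCR_cdToCR {d : S → ℕ → A} (hd : IsCD P d) : IsCR P (cdToCR d) := by
  refine ⟨fun s n a => ?_, fun s n => by simp [cdToCR], fun s n a h => ?_⟩
  · unfold cdToCR; split_ifs <;> norm_num
  · unfold cdToCR at h
    split_ifs at h with ha
    · exact ha ▸ hd s n
    · exact absurd h (lt_irrefl 0)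

lemma crVI_cdToCR_succ (d : S → ℕ → A) (q t : ℝ) (c f : S → ℝ) (k j : ℕ) (s : S) :
    crVI P (cdToCR d) q t c f k (j + 1) s
      = ∑ s', P s (d s (k - j)) s' * crVI P (cdToCR d) q t c f k j s'
        + phi (q * t) (k - j) * f s + psi (q * t) (k - j) * (c s / q) := by
  simp [crVI, cdToCR]

/-- The witness is the deterministic scheduler that at step `n` takes an action attaining the
`sSup` in `maxVI … k (k + 1 - n)`. -/
lemma exists_isCR_crVI_eq_maxVI (hA : ∀ s, ∃ a, Enabled P s a) (q t : ℝ) (c f : S → ℝ)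
    (k : ℕ) : ∃ sch, IsCR P sch ∧
      ∀ j ≤ k + 1, ∀ s, crVI P sch q t c f k j s = maxVI P q t c f k j s := by
  choose g hg using fun s j => exists_enabled_eq_sSup (hA s) (maxVI P q t c f k j)
  refine ⟨cdToCR fun s n => g s (k - n), IsCD.isCR_cdToCR fun s n => (hg s _).1,
    fun j hj => ?_⟩
  induction j with
  | zero => exact fun _ => rfl
  | succ j ih =>
    intro s
    simp only [crVI_cdToCR_succ, maxVI, show k - (k - j) = j by omega, (hg s j).2,
      ih (by omega)]

end Optimality

lemma abs_sub_ciSup_le {ι : Type*} {g : ι → ℝ} {m d : ℝ} (hle : ∀ i, g i ≤ m + d)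
    (hge : ∃ i, m ≤ g i) : |m - ⨆ i, g i| ≤ d := by
  obtain ⟨i₀, hi₀⟩ := hge
  have : Nonempty ι := ⟨i₀⟩
  have hsup_le : ⨆ i, g i ≤ m + d := ciSup_le hle
  have hle_sup : g i₀ ≤ ⨆ i, g i := le_ciSup ⟨m + d, Set.forall_mem_range.2 hle⟩ i₀
  rw [abs_sub_le_iff]
  constructor <;> linarith [hle i₀]

/-- for an ε-sufficient `k`, the maximising value-iteration vector
`q'_0` is within `ε` of the supremum of the value over CR schedulers. -/
theorem stmt12 {S A : Type} [Fintype S] [Nonempty S] [Fintype A]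
    [DecidableEq S] [DecidableEq A]
    (P : S → A → S → ℝ) (hP : IsDTMDP P)
    (q t : ℝ) (hq : 0 < q) (ht : 0 ≤ t)
    (c f : S → ℝ) (hc : ∀ s, 0 ≤ c s) (hf : ∀ s, 0 ≤ f s)
    (ε : ℝ) (hε : 0 < ε) (k : ℕ) (hk : EpsSufficient q t c f ε k) :
    ∀ s0 : S,
      |maxVI P q t c f k (k + 1) s0 -
        ⨆ sch : {sch : S → ℕ → A → ℝ // IsCR P sch},
          value q t c f (crProb P sch.1 s0)| < ε := by
  intro s0
  obtain ⟨σ, hσ, hσ_max⟩ := exists_isCR_crVI_eq_maxVI hP.2.2 q t c f k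
  refine (abs_sub_ciSup_le (fun sch => ?_) ⟨⟨σ, hσ⟩, ?_⟩).trans_lt
    (hk.truncErr_lt hq (maxOf_nonneg hc) hε)
  · obtain ⟨sch, hs⟩ := sch
    calc value q t c f (crProb P sch s0)
        ≤ ∑ i ∈ Finset.range (k + 1), valueTerm q t c f (crProb P sch s0) i
            + truncErr q t c f k :=
          value_le_sum_range_valueTerm_add_truncErr hq.le ht hc hf
            (crProb_nonneg hP.1 hs s0) (sum_crProb hs s0) k
      _ = crVI P sch q t c f k (k + 1) s0 + truncErr q t c f k := by
          rw [crVI_eq_sum_range_valueTerm]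
      _ ≤ maxVI P q t c f k (k + 1) s0 + truncErr q t c f k := by
          gcongr
          exact crVI_le_maxVI hP.1 hs q t c f k (k + 1) s0
  · calc maxVI P q t c f k (k + 1) s0
        = ∑ i ∈ Finset.range (k + 1), valueTerm q t c f (crProb P σ s0) i := by
          rw [← hσ_max (k + 1) le_rfl, crVI_eq_sum_range_valueTerm]
      _ ≤ value q t c f (crProb P σ s0) :=
          sum_range_valueTerm_le_value hq.le ht hc hf
            (crProb_nonneg hP.1 hσ s0) (sum_crProb hσ s0) _

end TR
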